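/- Let H, H₁, H₂ be Hilbert spaces over 𝕜, L : H₁ → H and M : H₂ → H bounded linear operators. The following are equivalent: (1) range L ⊆ range M; (2) there exists a constant c > 0 such that ‖L* u‖² ≤ c·‖M* u‖² for all u ∈ H (i.e. L L* ≤ c·M M* in the operator order); (3) there exists a bounded linear operator X : H₁ → H₂ with L = M ∘ X. (Douglas factorization theorem.) -/

import Mathlib

/-!
If `range L ⊆ range M`, then `L = M X` with `X = (M|_{(ker M)ᗮ})⁻¹ L`, which is bounded by the
closed graph theorem. A factorization `L = M X` gives `L* = X* M*`, hence `‖L* u‖ ≤ ‖X‖ ‖M* u‖`.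
Conversely, such a bound makes `M* u ↦ L* u` a well-defined bounded map on the range of `M*`;
extending it to the closure of that range and precomposing with the orthogonal projection gives
`D` with `D M* = L*`, and then `L = M D*`.
-/

open ContinuousLinearMap

theorem LinearMap.exists_continuousLinearMap_comp_eq_of_norm_le
    {𝕜 E F G : Type*} [RCLike 𝕜] [AddCommGroup E] [Module 𝕜 E]
    [NormedAddCommGroup F] [InnerProductSpace 𝕜 F] [CompleteSpace F]
    [NormedAddCommGroup G] [NormedSpace 𝕜 G] [CompleteSpace G]
    (A : E →ₗ[𝕜] F) (B : E →ₗ[𝕜] G) {C : ℝ} (hBA : ∀ u, ‖B u‖ ≤ C * ‖A u‖) :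
    ∃ D : F →L[𝕜] G, ∀ u, D (A u) = B u := by
  set T := (range A).topologicalClosure
  let e : E →ₗ[𝕜] T :=
    A.codRestrict T fun u ↦ (range A).le_topologicalClosure (mem_range_self A u)
  have he : DenseRange e := by
    refine Subtype.dense_iff.2 ?_
    rw [← Set.range_comp]
    exact (range A).topologicalClosure_coe.le
  refine ⟨B.extendOfNorm e ∘L T.orthogonalProjectionOnto, fun u ↦ ?_⟩
  rw [ContinuousLinearMap.comp_apply, show T.orthogonalProjectionOnto (A u) = e u from
    T.orthogonalProjectionOnto_mem_subspace_eq_self (e u), extendOfNorm_eq he ⟨C, hBA⟩]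

namespace ContinuousLinearMap

theorem exists_comp_eq_of_range_subset_of_injective
    {𝕜 E F G : Type*} [NontriviallyNormedField 𝕜]
    [NormedAddCommGroup E] [NormedSpace 𝕜 E] [CompleteSpace E]
    [NormedAddCommGroup F] [NormedSpace 𝕜 F] [CompleteSpace F]
    [NormedAddCommGroup G] [NormedSpace 𝕜 G]
    {L : E →L[𝕜] G} {M : F →L[𝕜] G} (hM : Function.Injective M)
    (hLM : Set.range L ⊆ Set.range M) :
    ∃ X : E →L[𝕜] F, M ∘L X = L := by
  let X : E →ₗ[𝕜] F := (LinearEquiv.ofInjective (M : F →ₗ[𝕜] G) hM).symm ∘ₗ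
    (L : E →ₗ[𝕜] G).codRestrict (LinearMap.range (M : F →ₗ[𝕜] G)) fun u ↦ hLM ⟨u, rfl⟩
  have hMX : ∀ u, M (X u) = L u := fun u ↦
    congrArg Subtype.val ((LinearEquiv.ofInjective (M : F →ₗ[𝕜] G) hM).apply_symm_apply _)
  have hgraph : (X.graph : Set (E × F)) = {p | L p.1 = M p.2} := by
    ext ⟨u, v⟩
    simp only [LinearMap.mem_graph_iff, SetLike.mem_coe, Set.mem_ofPred_eq, ← hMX u]
    exact ⟨fun h ↦ h ▸ rfl, fun h ↦ (hM h).symm⟩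
  have hclosed : IsClosed (X.graph : Set (E × F)) :=
    hgraph ▸ isClosed_eq (by fun_prop) (by fun_prop)
  exact ⟨.ofIsClosedGraph hclosed, ext hMX⟩

theorem exists_comp_eq_of_range_subset
    {𝕜 E F G : Type*} [RCLike 𝕜]
    [NormedAddCommGroup E] [NormedSpace 𝕜 E] [CompleteSpace E]
    [NormedAddCommGroup F] [InnerProductSpace 𝕜 F] [CompleteSpace F]
    [NormedAddCommGroup G] [NormedSpace 𝕜 G]
    {L : E →L[𝕜] G} {M : F →L[𝕜] G} (hLM : Set.range L ⊆ Set.range M) :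
    ∃ X : E →L[𝕜] F, M ∘L X = L := by
  set K := M.kerᗮ
  have hinj : Function.Injective (M ∘L K.subtypeL) := by
    refine (injective_iff_map_eq_zero _).2 fun v hv ↦ Subtype.ext ?_
    have : (v : F) ∈ M.ker ⊓ K := ⟨hv, v.2⟩
    rwa [Submodule.inf_orthogonal_eq_bot] at this
  have hrange : Set.range M ⊆ Set.range (M ∘L K.subtypeL) := by
    rintro _ ⟨v, rfl⟩
    refine ⟨⟨v - M.ker.starProjection v, Submodule.sub_starProjection_mem_orthogonal v⟩, ?_⟩
    have hker : M (M.ker.starProjection v) = 0 := M.ker.starProjection_apply_mem v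
    simp [hker]
  obtain ⟨X, hX⟩ := exists_comp_eq_of_range_subset_of_injective hinj (hLM.trans hrange)
  exact ⟨K.subtypeL ∘L X, by rw [← hX]; rfl⟩

variable {𝕜 H H₁ H₂ : Type*} [RCLike 𝕜]
  [NormedAddCommGroup H] [InnerProductSpace 𝕜 H] [CompleteSpace H]
  [NormedAddCommGroup H₁] [InnerProductSpace 𝕜 H₁] [CompleteSpace H₁]
  [NormedAddCommGroup H₂] [InnerProductSpace 𝕜 H₂] [CompleteSpace H₂]

theorem norm_adjoint_apply_le_of_eq_comp {L : H₁ →L[𝕜] H} {M : H₂ →L[𝕜] H} {X : H₁ →L[𝕜] H₂}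
    (hLMX : L = M ∘L X) (u : H) : ‖adjoint L u‖ ≤ ‖X‖ * ‖adjoint M u‖ := by
  rw [hLMX, adjoint_comp, comp_apply, ← adjoint.norm_map X]
  exact le_opNorm _ _

theorem exists_eq_comp_of_norm_adjoint_le {L : H₁ →L[𝕜] H} {M : H₂ →L[𝕜] H} {C : ℝ}
    (hLM : ∀ u, ‖adjoint L u‖ ≤ C * ‖adjoint M u‖) : ∃ X : H₁ →L[𝕜] H₂, L = M ∘L X := by
  obtain ⟨D, hD⟩ :=
    LinearMap.exists_continuousLinearMap_comp_eq_of_norm_le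
      (adjoint M : H →ₗ[𝕜] H₂) (adjoint L : H →ₗ[𝕜] H₁) hLM
  have hDM : D ∘L adjoint M = adjoint L := ext hD
  refine ⟨adjoint D, ?_⟩
  rw [← adjoint_adjoint L, ← hDM, adjoint_comp, adjoint_adjoint]

end ContinuousLinearMap

theorem douglas_factorization
    {𝕜 : Type*} [RCLike 𝕜]
    {H H₁ H₂ : Type*}
    [NormedAddCommGroup H] [InnerProductSpace 𝕜 H] [CompleteSpace H]
    [NormedAddCommGroup H₁] [InnerProductSpace 𝕜 H₁] [CompleteSpace H₁]
    [NormedAddCommGroup H₂] [InnerProductSpace 𝕜 H₂] [CompleteSpace H₂]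
    (L : H₁ →L[𝕜] H) (M : H₂ →L[𝕜] H) :
    List.TFAE [
      Set.range L ⊆ Set.range M,
      ∃ c : ℝ, 0 < c ∧ ∀ u : H,
        ‖ContinuousLinearMap.adjoint L u‖ ^ 2 ≤ c * ‖ContinuousLinearMap.adjoint M u‖ ^ 2,
      ∃ X : H₁ →L[𝕜] H₂, L = M.comp X ] := by
  tfae_have 1 → 3 := fun h ↦ (exists_comp_eq_of_range_subset h).imp fun _ ↦ Eq.symm
  tfae_have 3 → 1 := by
    rintro ⟨X, rfl⟩ _ ⟨u, rfl⟩
    exact ⟨X u, rfl⟩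
  tfae_have 3 → 2 := by
    rintro ⟨X, hX⟩
    refine ⟨‖X‖ ^ 2 + 1, by positivity, fun u ↦ ?_⟩
    calc ‖adjoint L u‖ ^ 2 ≤ (‖X‖ * ‖adjoint M u‖) ^ 2 := by
          gcongr
          exact norm_adjoint_apply_le_of_eq_comp hX u
      _ ≤ (‖X‖ ^ 2 + 1) * ‖adjoint M u‖ ^ 2 := by rw [mul_pow]; gcongr; linarith
  tfae_have 2 → 3 := by
    rintro ⟨c, hc, hLM⟩
    refine exists_eq_comp_of_norm_adjoint_le (C := √c) fun u ↦ ?_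
    refine (pow_le_pow_iff_left₀ (norm_nonneg _) (by positivity) two_ne_zero).1 ?_
    rw [mul_pow, Real.sq_sqrt hc.le]
    exact hLM u
  tfae_finish
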